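/- (Lifting Lemma) Let (X,d) be a metric space, let P ⊆ X be a nonempty finite set, let δ > 0, and let Q ⊆ P be a δ-cover of P. Then for every nonempty subset C ⊆ Q, cost(C,P) ≤ cost(C,Q) + δ. -/

import Mathlib

/-- `setDist s C` is the distance from the point `s` to the set `C`,
i.e. the infimum (for nonempty finite `C`, the minimum) of `dist s c` over `c ∈ C`. -/
noncomputable def setDist {X : Type*} [MetricSpace X] (s : X) (C : Set X) : ℝ :=
  sInf ((fun c => dist s c) '' C)

/-- `cost C S` is the supremum (for nonempty finite `S`, the maximum) over `s ∈ S`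
of the distance from `s` to the center set `C`. -/
noncomputable def cost {X : Type*} [MetricSpace X] (C S : Set X) : ℝ :=
  sSup ((fun s => setDist s C) '' S)

/-! Every point of `P` lies within `δ` of a point `q` of `Q`, and by the triangle inequality
its distance to `C` exceeds that of `q` by at most `δ`; the distance of `q` to `C` is at most
`cost C Q`. -/

section

variable {X : Type*} [MetricSpace X]

theorem setDist_nonneg (s : X) (C : Set X) : 0 ≤ setDist s C :=
  Real.sInf_nonneg (by rintro _ ⟨c, -, rfl⟩; exact dist_nonneg)

theorem setDist_le_dist (s : X) {C : Set X} {c : X} (hc : c ∈ C) : setDist s C ≤ dist s c :=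
  csInf_le ⟨0, by rintro _ ⟨c, -, rfl⟩; exact dist_nonneg⟩ ⟨c, hc, rfl⟩

/-- No finiteness is needed: for `C = ∅` both distances are the junk value `sInf ∅ = 0`. -/
theorem setDist_le_dist_add_setDist (p q : X) (C : Set X) :
    setDist p C ≤ dist p q + setDist q C := by
  rcases C.eq_empty_or_nonempty with rfl | hC
  · simp [setDist, dist_nonneg]
  · rw [← sub_le_iff_le_add']
    refine le_csInf (hC.image _) ?_
    rintro _ ⟨c, hc, rfl⟩
    rw [sub_le_iff_le_add']
    exact (setDist_le_dist p hc).trans (dist_triangle p q c)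

theorem cost_nonneg (C S : Set X) : 0 ≤ cost C S :=
  Real.sSup_nonneg (by rintro _ ⟨s, -, rfl⟩; exact setDist_nonneg s C)

theorem setDist_le_cost {C S : Set X} (hS : S.Finite) {s : X} (hs : s ∈ S) :
    setDist s C ≤ cost C S :=
  le_csSup (hS.image _).bddAbove ⟨s, hs, rfl⟩

theorem cost_le {C S : Set X} {b : ℝ} (hb : 0 ≤ b) (h : ∀ s ∈ S, setDist s C ≤ b) :
    cost C S ≤ b :=
  Real.sSup_le (by rintro _ ⟨s, hs, rfl⟩; exact h s hs) hb

end

theorem stmt_8_general {X : Type*} [MetricSpace X] (P Q : Finset X)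
    (δ : ℝ) (hδ : 0 < δ)
    (hcover : ∀ p ∈ P, ∃ q ∈ Q, dist p q ≤ δ)
    (C : Finset X) :
    cost (C : Set X) (P : Set X) ≤ cost (C : Set X) (Q : Set X) + δ := by
  have hb : 0 ≤ cost (C : Set X) Q + δ := by linarith [cost_nonneg (C : Set X) Q]
  refine cost_le hb fun p hp => ?_
  obtain ⟨q, hq, hpq⟩ := hcover p hp
  calc setDist p (C : Set X) ≤ dist p q + setDist q (C : Set X) :=
        setDist_le_dist_add_setDist p q C
    _ ≤ δ + cost (C : Set X) Q := add_le_add hpq (setDist_le_cost Q.finite_toSet hq)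
    _ = cost (C : Set X) Q + δ := add_comm _ _

/-- Lifting Lemma: if `Q ⊆ P` is a `δ`-cover of the nonempty finite set `P`,
then for every nonempty `C ⊆ Q`, `cost(C,P) ≤ cost(C,Q) + δ`. -/
theorem stmt_8 {X : Type*} [MetricSpace X] (P Q : Finset X) (hP : P.Nonempty)
    (δ : ℝ) (hδ : 0 < δ) (hQP : Q ⊆ P)
    (hcover : ∀ p ∈ P, ∃ q ∈ Q, dist p q ≤ δ)
    (C : Finset X) (hC : C.Nonempty) (hCQ : C ⊆ Q) :
    cost (C : Set X) (P : Set X) ≤ cost (C : Set X) (Q : Set X) + δ :=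
  stmt_8_general P Q δ hδ hcover C
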